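/- Let M, N ≥ 1 and let {g(x, ω)} be as in the SAA setting with X finite and nonempty. Define v^{(M)} = min_{x∈X}(1/M)Σ_{k=1}^M g(x, ω_k) over i.i.d. samples. Then for M' = 2M obtained by averaging two independent size-M samples, E[v^{(2M)}] ≥ E[v^{(M)}]; i.e., the expected SAA optimal value is monotonically nondecreasing in (doubling of) the sample size. -/
import Mathlib


/-- Monotonicity of the expected SAA optimal value under doubling of the sample size:
`E[v^{(2M)}] ≥ E[v^{(M)}]`. -/
theorem saa_monotone_in_sample_size {X Ω : Type*} [Fintype X] [Nonempty X] [Fintype Ω]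
    (p : Ω → ℝ) (g : X → Ω → ℝ) (M : ℕ) (hM : 0 < M)
    (hp : ∀ ω, 0 ≤ p ω) (hsum : ∑ ω, p ω = 1) :
    ∑ s : Fin (2 * M) → Ω, (∏ k, p (s k)) *
        (Finset.univ.inf' Finset.univ_nonempty
          (fun x : X => (1 / ((2 * M : ℕ) : ℝ)) * ∑ k, g x (s k)))
      ≥ ∑ s : Fin M → Ω, (∏ k, p (s k)) *
          (Finset.univ.inf' Finset.univ_nonempty
            (fun x : X => (1 / (M : ℝ)) * ∑ k, g x (s k))) := by
  classical
  rw [two_mul]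
  set v : (Fin M → Ω) → ℝ := fun a =>
    Finset.univ.inf' Finset.univ_nonempty
      (fun x : X => (1 / (M : ℝ)) * ∑ k, g x (a k)) with hv
  have hP : ∀ (a : Fin M → Ω), 0 ≤ ∏ k, p (a k) :=
    fun a => Finset.prod_nonneg (fun k _ => hp _)
  have hPsum : ∑ a : Fin M → Ω, ∏ k, p (a k) = 1 := by
    rw [← Fintype.piFinset_univ, ← Finset.prod_univ_sum]
    simp [hsum]
  set e : (Fin (M + M) → Ω) ≃ (Fin M → Ω) × (Fin M → Ω) :=
    (Equiv.arrowCongr finSumFinEquiv.symm (Equiv.refl Ω)).trans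
      (Equiv.sumArrowEquivProdArrow _ _ Ω) with he
  have hsym : ∀ (a b : Fin M → Ω) (k : Fin (M + M)),
      e.symm (a, b) k = Sum.elim a b (finSumFinEquiv.symm k) := by
    intro a b k
    simp [he, Equiv.arrowCongr, Equiv.sumArrowEquivProdArrow]
  rw [← Equiv.sum_comp e.symm, Fintype.sum_prod_type]
  have hprod : ∀ (a b : Fin M → Ω),
      (∏ k, p (e.symm (a, b) k)) = (∏ k, p (a k)) * (∏ k, p (b k)) := by
    intro a b
    simp only [hsym]
    rw [← (Equiv.prod_comp finSumFinEquiv (fun k => p (Sum.elim a b (finSumFinEquiv.symm k))))]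
    simp [Fintype.prod_sum_type]
  have hgsum : ∀ (a b : Fin M → Ω) (x : X),
      (∑ k, g x (e.symm (a, b) k)) = (∑ k, g x (a k)) + (∑ k, g x (b k)) := by
    intro a b x
    simp only [hsym]
    rw [← (Equiv.sum_comp finSumFinEquiv (fun k => g x (Sum.elim a b (finSumFinEquiv.symm k))))]
    simp [Fintype.sum_sum_type]
  have hMR : (0 : ℝ) < (M : ℝ) := by exact_mod_cast hM
  -- pointwise bound
  have hpt : ∀ (a b : Fin M → Ω),
      (1/2) * v a + (1/2) * v b ≤
        Finset.univ.inf' Finset.univ_nonempty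
          (fun x : X => (1 / ((M + M : ℕ) : ℝ)) * ∑ k, g x (e.symm (a, b) k)) := by
    intro a b
    apply Finset.le_inf'
    intro x _
    rw [hgsum]
    have ha : v a ≤ (1 / (M : ℝ)) * ∑ k, g x (a k) :=
      Finset.inf'_le _ (Finset.mem_univ x)
    have hb : v b ≤ (1 / (M : ℝ)) * ∑ k, g x (b k) :=
      Finset.inf'_le _ (Finset.mem_univ x)
    have : ((M + M : ℕ) : ℝ) = 2 * (M : ℝ) := by push_cast; ring
    rw [this]
    have h2 : (1 / (2 * (M : ℝ))) * ((∑ k, g x (a k)) + ∑ k, g x (b k))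
        = (1/2) * ((1 / (M : ℝ)) * ∑ k, g x (a k))
          + (1/2) * ((1 / (M : ℝ)) * ∑ k, g x (b k)) := by
      field_simp
    rw [h2]
    linarith
  calc ∑ a : Fin M → Ω, ∑ b : Fin M → Ω, (∏ k, p (e.symm (a, b) k)) *
        (Finset.univ.inf' Finset.univ_nonempty
          (fun x : X => (1 / ((M + M : ℕ) : ℝ)) * ∑ k, g x (e.symm (a, b) k)))
      ≥ ∑ a : Fin M → Ω, ∑ b : Fin M → Ω,
          ((∏ k, p (a k)) * (∏ k, p (b k))) * ((1/2) * v a + (1/2) * v b) := by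
        apply Finset.sum_le_sum
        intro a _
        apply Finset.sum_le_sum
        intro b _
        rw [hprod]
        exact mul_le_mul_of_nonneg_left (hpt a b) (mul_nonneg (hP a) (hP b))
    _ = ∑ a : Fin M → Ω, (∏ k, p (a k)) * v a := by
        have expand : ∀ a b : Fin M → Ω,
            ((∏ k, p (a k)) * (∏ k, p (b k))) * ((1/2) * v a + (1/2) * v b)
            = (1/2) * (((∏ k, p (a k)) * v a) * (∏ k, p (b k)))
              + (1/2) * ((∏ k, p (a k)) * ((∏ k, p (b k)) * v b)) := by
          intro a b; ring
        simp_rw [expand, Finset.sum_add_distrib, ← Finset.mul_sum,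
          ← Finset.sum_mul, hPsum]
        ring_nf
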